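/- arXiv:2307.11108 — 3 statements merged into one kernel-verified Lean document; each statement's English description precedes it below -/
import Mathlib

section
/- If θ* is a local minimum of a twice-differentiable function L and L equals its second-order Taylor expansion around θ* on the ball B(θ*, ρ), then the zeroth-order flatness R⁰_ρ(θ*) = max_{θ' ∈ B(θ*,ρ)} (L(θ') − L(θ*)) satisfies λ_max(∇²L(θ*)) = 2 R⁰_ρ(θ*) / ρ². -/
open Metric

/-- If θ* is a local minimum of a twice-differentiable L that equals its
second-order Taylor expansion (with symmetric PSD Hessian H) on B(θ*,ρ), then
λ_max(H) = 2 R⁰_ρ(θ*) / ρ². -/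
theorem zeroth_order_flatness_eigenvalue
    {d : ℕ} (L : EuclideanSpace ℝ (Fin d) → ℝ) (θstar : EuclideanSpace ℝ (Fin d))
    (ρ : ℝ) (hρ : 0 < ρ)
    (hL : ContDiff ℝ 2 L)
    (hmin : IsLocalMin L θstar)
    (H : Matrix (Fin d) (Fin d) ℝ) (hH : H.IsHermitian) (hPSD : H.PosSemidef)
    (hTaylor : ∀ θ ∈ closedBall θstar ρ,
      L θ = L θstar
        + (1 / 2) * (inner ℝ (θ - θstar) ((Matrix.toEuclideanLin H) (θ - θstar)) : ℝ))
    (lam : ℝ) (hlam : IsGreatest (Set.range hH.eigenvalues) lam) :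
    lam = 2 * sSup ((fun θ' => L θ' - L θstar) '' closedBall θstar ρ) / ρ ^ 2 := by
  obtain ⟨i, hi⟩ := hlam.1
  have hlam0 : 0 ≤ lam := hi ▸ hPSD.eigenvalues_nonneg i
  set T : EuclideanSpace ℝ (Fin d) →ₗ[ℝ] EuclideanSpace ℝ (Fin d) :=
    Matrix.toEuclideanLin H with hT
  set B := hH.eigenvectorBasis with hB
  have hTB : ∀ j, T (B j) = hH.eigenvalues j • B j := by
    intro j
    exact (WithLp.equiv 2 _).injective (hH.mulVec_eigenvectorBasis j)
  have hsymm : T.IsSymmetric := Matrix.isHermitian_iff_isSymmetric.1 hH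
  have hrepr : ∀ (x) (j), B.repr (T x) j = hH.eigenvalues j * B.repr x j := by
    intro x j
    rw [B.repr_apply_apply, B.repr_apply_apply, ← hsymm (B j) x, hTB j,
      real_inner_smul_left]
  have hquad : ∀ x : EuclideanSpace ℝ (Fin d),
      (inner ℝ x (T x) : ℝ) = ∑ j, hH.eigenvalues j * (B.repr x j) ^ 2 := by
    intro x
    rw [← B.repr.inner_map_map x (T x), PiLp.inner_apply]
    refine Finset.sum_congr rfl fun j _ => ?_
    simp [hrepr, sq]
    ring
  have hn : ∀ x : EuclideanSpace ℝ (Fin d), ∑ j, (B.repr x j) ^ 2 = ‖x‖ ^ 2 := by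
    intro x
    rw [← real_inner_self_eq_norm_sq, ← B.repr.inner_map_map x x, PiLp.inner_apply]
    simp [sq]
  have hub : ∀ x : EuclideanSpace ℝ (Fin d), (inner ℝ x (T x) : ℝ) ≤ lam * ‖x‖ ^ 2 := by
    intro x
    rw [hquad, ← hn x, Finset.mul_sum]
    refine Finset.sum_le_sum fun j _ => ?_
    exact mul_le_mul_of_nonneg_right (hlam.2 ⟨j, rfl⟩) (sq_nonneg _)
  have hBnorm : ‖B i‖ = 1 := B.orthonormal.1 i
  have hveq : (inner ℝ (B i) (T (B i)) : ℝ) = lam := by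
    rw [hTB i, real_inner_smul_right, real_inner_self_eq_norm_sq, hBnorm]
    simp [hi]
  set S := (fun θ' => L θ' - L θstar) '' closedBall θstar ρ with hS
  have hgreat : IsGreatest S (lam * ρ ^ 2 / 2) := by
    constructor
    · refine ⟨θstar + ρ • B i, ?_, ?_⟩
      · rw [mem_closedBall, dist_eq_norm]
        simp [norm_smul, hBnorm, abs_of_pos hρ]
      · have hmem : θstar + ρ • B i ∈ closedBall θstar ρ := by
          rw [mem_closedBall, dist_eq_norm]
          simp [norm_smul, hBnorm, abs_of_pos hρ]
        show L (θstar + ρ • B i) - L θstar = lam * ρ ^ 2 / 2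
        rw [hTaylor _ hmem]
        have hsub : θstar + ρ • B i - θstar = ρ • B i := by abel
        rw [hsub]
        have : (inner ℝ (ρ • B i) (T (ρ • B i)) : ℝ) = ρ ^ 2 * lam := by
          rw [map_smul, real_inner_smul_right, real_inner_smul_left, hveq]
          ring
        rw [this]; ring
    · rintro y ⟨θ, hθ, rfl⟩
      show L θ - L θstar ≤ lam * ρ ^ 2 / 2
      rw [hTaylor θ hθ]
      have h1 := hub (θ - θstar)
      have h2 : ‖θ - θstar‖ ≤ ρ := by rwa [mem_closedBall, dist_eq_norm] at hθ
      have h3 : ‖θ - θstar‖ ^ 2 ≤ ρ ^ 2 := by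
        exact pow_le_pow_left₀ (norm_nonneg _) h2 2
      nlinarith [norm_nonneg (θ - θstar)]
  rw [hgreat.csSup_eq]
  field_simp
end

section
/- If θ* is a local minimum of a twice-differentiable function L and L equals its second-order Taylor expansion around θ* on the ball B(θ*, ρ), then the first-order flatness R¹_ρ(θ*) = ρ · max_{θ' ∈ B(θ*,ρ)} ‖∇L(θ')‖ satisfies λ_max(∇²L(θ*)) = R¹_ρ(θ*) / ρ². -/
open Metric

/-- Under the exact second-order Taylor assumption at a local minimum θ*
(so that ∇L(θ) = H(θ−θ*) on B(θ*,ρ)), the first-order flatness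
R¹_ρ(θ*) = ρ · max_{θ'∈B(θ*,ρ)} ‖∇L(θ')‖ satisfies λ_max(H) = R¹_ρ(θ*) / ρ². -/
theorem first_order_flatness_eigenvalue
    {d : ℕ} (L : EuclideanSpace ℝ (Fin d) → ℝ) (θstar : EuclideanSpace ℝ (Fin d))
    (ρ : ℝ) (hρ : 0 < ρ)
    (hL : ContDiff ℝ 2 L)
    (hmin : IsLocalMin L θstar)
    (H : Matrix (Fin d) (Fin d) ℝ) (hH : H.IsHermitian) (hPSD : H.PosSemidef)
    (hTaylor : ∀ θ ∈ closedBall θstar ρ,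
      L θ = L θstar
        + (1 / 2) * (inner ℝ (θ - θstar) ((Matrix.toEuclideanLin H) (θ - θstar)) : ℝ))
    (hgrad : ∀ θ ∈ closedBall θstar ρ,
      gradient L θ = (Matrix.toEuclideanLin H) (θ - θstar))
    (lam : ℝ) (hlam : IsGreatest (Set.range hH.eigenvalues) lam) :
    lam = (ρ * sSup ((fun θ' => ‖gradient L θ'‖) '' closedBall θstar ρ)) / ρ ^ 2 := by
  classical
  obtain ⟨⟨i0, hi0⟩, hub⟩ := hlam
  set B := hH.eigenvectorBasis with hB
  set μ := hH.eigenvalues with hμ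
  have hsym : (Matrix.toEuclideanLin H).IsSymmetric :=
    Matrix.isHermitian_iff_isSymmetric.1 hH
  have hμnn : ∀ i, 0 ≤ μ i := hPSD.eigenvalues_nonneg
  have hlamnn : 0 ≤ lam := hi0 ▸ hμnn i0
  have hEig : ∀ i, Matrix.toEuclideanLin H (B i) = μ i • B i := by
    intro i
    apply (WithLp.equiv 2 (Fin d → ℝ)).injective
    simpa [Matrix.toEuclideanLin_apply] using hH.mulVec_eigenvectorBasis i
  -- key bound
  have hbound : ∀ v : EuclideanSpace ℝ (Fin d),
      ‖Matrix.toEuclideanLin H v‖ ≤ lam * ‖v‖ := by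
    intro v
    have hrepr : ∀ i, B.repr (Matrix.toEuclideanLin H v) i = μ i * B.repr v i := by
      intro i
      rw [B.repr_apply_apply, ← hsym (B i) v, hEig i, B.repr_apply_apply]
      simp only [real_inner_smul_left]
    have hsq : ‖Matrix.toEuclideanLin H v‖ ^ 2 ≤ (lam * ‖v‖) ^ 2 := by
      rw [← B.repr.norm_map (Matrix.toEuclideanLin H v), ← B.repr.norm_map v]
      rw [EuclideanSpace.norm_eq, EuclideanSpace.norm_eq]
      rw [Real.sq_sqrt (by positivity), mul_pow, Real.sq_sqrt (by positivity),
        Finset.mul_sum]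
      apply Finset.sum_le_sum
      intro i _
      rw [hrepr i]
      have h1 : μ i ≤ lam := hub ⟨i, rfl⟩
      have h2 : |(μ i * B.repr v i)| ≤ lam * |B.repr v i| := by
        rw [abs_mul, abs_of_nonneg (hμnn i)]
        exact mul_le_mul_of_nonneg_right h1 (abs_nonneg _)
      calc ‖μ i * B.repr v i‖ ^ 2 = |μ i * B.repr v i| ^ 2 := by rw [Real.norm_eq_abs]
        _ ≤ (lam * |B.repr v i|) ^ 2 := by
            apply pow_le_pow_left₀ (abs_nonneg _) h2
        _ = lam ^ 2 * ‖B.repr v i‖ ^ 2 := by rw [mul_pow, Real.norm_eq_abs]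
    exact (pow_le_pow_iff_left₀ (norm_nonneg _) (by positivity) two_ne_zero).1 hsq
  -- the greatest value of the image set is ρ * lam
  have hgreat : IsGreatest ((fun θ' => ‖gradient L θ'‖) '' closedBall θstar ρ) (ρ * lam) := by
    constructor
    · refine ⟨θstar + ρ • B i0, ?_, ?_⟩
      · simp [mem_closedBall, dist_eq_norm, norm_smul, abs_of_pos hρ, hρ.le,
          B.orthonormal.1 i0]
      · have hmem : θstar + ρ • B i0 ∈ closedBall θstar ρ := by
          simp [mem_closedBall, dist_eq_norm, norm_smul, abs_of_pos hρ, hρ.le,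
            B.orthonormal.1 i0]
        show ‖gradient L (θstar + ρ • B i0)‖ = ρ * lam
        rw [hgrad _ hmem]
        simp only [add_sub_cancel_left, map_smul, hEig i0]
        rw [norm_smul, norm_smul]
        simp [abs_of_pos hρ, abs_of_nonneg (hμnn i0), hi0, mul_comm,
          B.orthonormal.1 i0, Or.inl hlamnn]
    · rintro x ⟨θ, hθ, rfl⟩
      show ‖gradient L θ‖ ≤ ρ * lam
      rw [hgrad _ hθ]
      calc ‖Matrix.toEuclideanLin H (θ - θstar)‖ ≤ lam * ‖θ - θstar‖ := hbound _
        _ ≤ lam * ρ := by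
            apply mul_le_mul_of_nonneg_left _ hlamnn
            rw [← dist_eq_norm]; exact mem_closedBall.1 hθ
        _ = ρ * lam := mul_comm _ _
  rw [hgreat.csSup_eq]
  field_simp
end

section
/- Let L : ℝᵈ → ℝ have γ-Lipschitz gradient, be bounded by M (|L| ≤ M), and suppose ‖∇L(θ)‖ ≤ G for all θ. Consider the deterministic recursion θ_{t+1} = θ_t − η_t(g_t + β v_t) with g_t = ∇L(θ_t), ‖v_t‖ ≤ γ ρ_t, learning rate η_t = η₀/√t and perturbation radius ρ_t = ρ₀/√t. Then (1/T) Σ_{t=1}^T ‖∇L(θ_t)‖² ≤ (C₁ + C₂ log T)/√T for constants C₁, C₂ depending only on γ, G, M, η₀, ρ₀, β. -/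
open Finset

lemma descent_lemma {d : ℕ} (L : EuclideanSpace ℝ (Fin d) → ℝ) (hL : Differentiable ℝ L)
    (γ : ℝ) (hγpos : 0 < γ)
    (hγ : ∀ x y, ‖gradient L x - gradient L y‖ ≤ γ * ‖x - y‖)
    (x y : EuclideanSpace ℝ (Fin d)) :
    L y ≤ L x + inner ℝ (gradient L x) (y - x) + γ * ‖y - x‖ ^ 2 := by
  have hfd : ∀ z, fderiv ℝ L z = InnerProductSpace.toDual ℝ _ (gradient L z) := fun z =>
    ((hL z).hasGradientAt.hasFDerivAt).fderiv
  have key := Convex.norm_image_sub_le_of_norm_fderiv_le'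
    (f := L) (φ := InnerProductSpace.toDual ℝ _ (gradient L x)) (C := γ * ‖y - x‖)
    (s := segment ℝ x y) (fun z _ => hL z)
    (fun z hz => by
      rw [hfd]
      rw [← map_sub]
      rw [(InnerProductSpace.toDual ℝ _).norm_map]
      calc ‖gradient L z - gradient L x‖ ≤ γ * ‖z - x‖ := hγ z x
        _ ≤ γ * ‖y - x‖ := by
          have hd := dist_add_dist_of_mem_segment hz
          have h1 : dist x z ≤ dist x y := by
            have := dist_nonneg (x := z) (y := y); linarith
          simp only [dist_eq_norm] at h1
          have h2 : ‖z - x‖ = ‖x - z‖ := norm_sub_rev _ _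
          have h3 : ‖x - y‖ = ‖y - x‖ := norm_sub_rev _ _
          nlinarith)
    (convex_segment x y) (left_mem_segment ℝ x y) (right_mem_segment ℝ x y)
  rw [InnerProductSpace.toDual_apply_apply] at key
  rw [Real.norm_eq_abs, abs_le] at key
  nlinarith [key.1, key.2]

set_option maxHeartbeats 1000000 in
/-- For the deterministic FAD recursion θ_{t+1} = θ_t − η_t(g_t + β v_t)
with γ-Lipschitz gradient, |L| ≤ M, ‖∇L‖ ≤ G, ‖v_t‖ ≤ γρ_t, η_t = η₀/√t, ρ_t = ρ₀/√t,
the averaged squared gradient norm satisfies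
(1/T) Σ_{t=1}^T ‖∇L(θ_t)‖² ≤ (C₁ + C₂ log T)/√T for constants C₁, C₂
depending only on γ, G, M, η₀, ρ₀, β. -/
theorem fad_convergence_rate
    {d : ℕ} (L : EuclideanSpace ℝ (Fin d) → ℝ) (hL : Differentiable ℝ L)
    (γ G M η₀ ρ₀ β : ℝ)
    (hγpos : 0 < γ) (hGpos : 0 < G) (hMpos : 0 < M)
    (hη₀ : 0 < η₀) (hρ₀ : 0 < ρ₀) (hβ : 0 ≤ β)
    (hγ : ∀ x y, ‖gradient L x - gradient L y‖ ≤ γ * ‖x - y‖)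
    (hbd : ∀ x, |L x| ≤ M) (hG : ∀ x, ‖gradient L x‖ ≤ G)
    (θ : ℕ → EuclideanSpace ℝ (Fin d)) (v : ℕ → EuclideanSpace ℝ (Fin d))
    (hv : ∀ t : ℕ, 1 ≤ t → ‖v t‖ ≤ γ * (ρ₀ / Real.sqrt t))
    (hupd : ∀ t : ℕ, 1 ≤ t →
      θ (t + 1) = θ t - (η₀ / Real.sqrt t) • (gradient L (θ t) + β • v t)) :
    ∃ C₁ C₂ : ℝ, ∀ T : ℕ, 1 ≤ T →
      (1 / (T : ℝ)) * ∑ t ∈ Icc 1 T, ‖gradient L (θ t)‖ ^ 2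
        ≤ (C₁ + C₂ * Real.log T) / Real.sqrt T := by
  set K : ℝ := β * G * γ * ρ₀ + γ * η₀ * (G + β * γ * ρ₀) ^ 2 with hK
  have hApos : 0 < G + β * γ * ρ₀ := by positivity
  have hKpos : 0 < K := by
    have h1 : 0 ≤ β * G * γ * ρ₀ := by positivity
    have h2 : 0 < γ * η₀ * (G + β * γ * ρ₀) ^ 2 :=
      mul_pos (mul_pos hγpos hη₀) (pow_pos hApos 2)
    linarith
  -- per-step bound
  have step : ∀ t : ℕ, 1 ≤ t → ‖gradient L (θ t)‖ ^ 2 ≤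
      (L (θ t) - L (θ (t + 1))) * Real.sqrt t / η₀ + K / Real.sqrt t := by
    intro t ht
    set st := Real.sqrt t with hst
    have hst1 : 1 ≤ st := by
      rw [hst, show (1:ℝ) = Real.sqrt 1 by simp]
      exact Real.sqrt_le_sqrt (by exact_mod_cast ht)
    have hstpos : 0 < st := lt_of_lt_of_le one_pos hst1
    set η := η₀ / st with hη
    have hηpos : 0 < η := div_pos hη₀ hstpos
    set g := gradient L (θ t) with hg
    set w := v t with hw
    have hdes := descent_lemma L hL γ hγpos hγ (θ t) (θ (t + 1))
    have hdiff : θ (t + 1) - θ t = -(η • (g + β • w)) := by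
      rw [hupd t ht]; abel
    rw [hdiff] at hdes
    rw [inner_neg_right, inner_smul_right, inner_add_right, inner_smul_right,
      real_inner_self_eq_norm_sq, norm_neg, norm_smul, Real.norm_eq_abs,
      abs_of_pos hηpos] at hdes
    -- bounds
    have hwb : ‖w‖ ≤ γ * (ρ₀ / st) := hv t ht
    have hgw : -(inner ℝ g w : ℝ) ≤ G * (γ * (ρ₀ / st)) := by
      have h1 := abs_real_inner_le_norm g w
      have h2 : ‖g‖ * ‖w‖ ≤ G * (γ * (ρ₀ / st)) := by
        apply mul_le_mul (hG _) hwb (norm_nonneg _) (le_of_lt hGpos)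
      have h3 := neg_le_of_abs_le h1
      linarith
    have hA : ‖g + β • w‖ ≤ G + β * γ * ρ₀ := by
      calc ‖g + β • w‖ ≤ ‖g‖ + ‖β • w‖ := norm_add_le _ _
        _ ≤ G + β * (γ * (ρ₀ / st)) := by
          rw [norm_smul, Real.norm_eq_abs, abs_of_nonneg hβ]
          exact add_le_add (hG _) (mul_le_mul_of_nonneg_left hwb hβ)
        _ ≤ G + β * γ * ρ₀ := by
          have h0 : ρ₀ / st ≤ ρ₀ := by
            rw [div_le_iff₀ hstpos]; nlinarith
          have h4 : β * (γ * (ρ₀ / st)) ≤ β * (γ * ρ₀) :=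
            mul_le_mul_of_nonneg_left (mul_le_mul_of_nonneg_left h0 hγpos.le) hβ
          linarith
    have hA2 : ‖g + β • w‖ ^ 2 ≤ (G + β * γ * ρ₀) ^ 2 :=
      pow_le_pow_left₀ (norm_nonneg _) hA 2
    -- clear denominators
    have hηst : η * st = η₀ := by rw [hη]; field_simp
    have hgwst : (-(inner ℝ g w : ℝ)) * st ≤ G * γ * ρ₀ := by
      calc (-(inner ℝ g w : ℝ)) * st ≤ (G * (γ * (ρ₀ / st))) * st :=
            mul_le_mul_of_nonneg_right hgw (le_of_lt hstpos)
        _ = G * γ * ρ₀ := by field_simp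
    have target : ‖g‖ ^ 2 ≤ ((L (θ t) - L (θ (t + 1))) * st * st + K * η₀) / (η₀ * st) := by
      rw [le_div_iff₀ (by positivity)]
      have hd2 := mul_le_mul_of_nonneg_right (by linarith [hdes] :
        η * (‖g‖ ^ 2 + β * inner ℝ g w) ≤ (L (θ t) - L (θ (t + 1))) + γ * (η * ‖g + β • w‖) ^ 2)
        (le_of_lt (mul_pos hstpos hstpos))
      rw [hK]
      have expand : η * (‖g‖ ^ 2 + β * inner ℝ g w) * (st * st)
          = (η * st) * (‖g‖ ^ 2 * st) + β * (η * st) * ((inner ℝ g w : ℝ) * st) := by ring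
      have expand2 : (L (θ t) - L (θ (t + 1)) + γ * (η * ‖g + β • w‖) ^ 2) * (st * st)
          = (L (θ t) - L (θ (t + 1))) * (st * st) + γ * (η * st) ^ 2 * ‖g + β • w‖ ^ 2 := by
        ring
      rw [expand, expand2, hηst] at hd2
      have m1 : β * η₀ * ((-(inner ℝ g w : ℝ)) * st) ≤ β * η₀ * (G * γ * ρ₀) :=
        mul_le_mul_of_nonneg_left hgwst (mul_nonneg hβ hη₀.le)
      have m2 : γ * η₀ ^ 2 * ‖g + β • w‖ ^ 2 ≤ γ * η₀ ^ 2 * (G + β * γ * ρ₀) ^ 2 :=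
        mul_le_mul_of_nonneg_left hA2 (by positivity)
      have final : ∀ E I N a b : ℝ,
          η₀ * (E * st) + β * η₀ * (I * st) ≤ (a - b) * (st * st) + γ * η₀ ^ 2 * N ^ 2 →
          β * η₀ * ((-I) * st) ≤ β * η₀ * (G * γ * ρ₀) →
          γ * η₀ ^ 2 * N ^ 2 ≤ γ * η₀ ^ 2 * (G + β * γ * ρ₀) ^ 2 →
          E * (η₀ * st) ≤ (a - b) * st * st
            + (β * G * γ * ρ₀ + γ * η₀ * (G + β * γ * ρ₀) ^ 2) * η₀ := by
        intro E I N a b h1 h2 h3; nlinarith [h1, h2, h3]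
      exact final _ _ _ _ _ hd2 m1 m2
    calc ‖g‖ ^ 2 ≤ ((L (θ t) - L (θ (t + 1))) * st * st + K * η₀) / (η₀ * st) := target
      _ = (L (θ t) - L (θ (t + 1))) * st / η₀ + K / st := by
        rw [div_add_div _ _ (ne_of_gt hη₀) (ne_of_gt hstpos)]
        congr 1
        ring
  -- telescoped bound by induction
  have key : ∀ T : ℕ, (∑ t ∈ Icc 1 T, ‖gradient L (θ t)‖ ^ 2)
      ≤ (M - L (θ (T + 1))) * Real.sqrt T / η₀ + 2 * K * Real.sqrt T := by
    intro T
    induction T with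
    | zero => simp
    | succ n ih =>
      rw [Finset.sum_Icc_succ_top (by omega : 1 ≤ n + 1)]
      have hstep := step (n + 1) (by omega)
      have hcast : ((n + 1 : ℕ) : ℝ) = (n : ℝ) + 1 := by push_cast; ring
      rw [hcast] at hstep
      set a := Real.sqrt n with ha
      set b := Real.sqrt ((n : ℝ) + 1) with hb
      have hanneg : 0 ≤ a := Real.sqrt_nonneg _
      have hb1 : 1 ≤ b := by
        have h9 : Real.sqrt 1 ≤ b := by
          rw [hb]
          exact Real.sqrt_le_sqrt (by have := Nat.cast_nonneg (α := ℝ) n; linarith)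
        simpa using h9
      have hbpos : 0 < b := lt_of_lt_of_le one_pos hb1
      have hab : a ≤ b := Real.sqrt_le_sqrt (by linarith [Nat.cast_nonneg (α := ℝ) n])
      have hsq : b ^ 2 = a ^ 2 + 1 := by
        rw [ha, hb, Real.sq_sqrt (by positivity), Real.sq_sqrt (Nat.cast_nonneg n)]
      have hM1 : 0 ≤ M - L (θ (n + 1)) := by
        have := abs_le.1 (hbd (θ (n + 1))); linarith [this.1]
      have hM2 : |L (θ (n + 1 + 1))| ≤ M := hbd _
      -- ineq A
      have hA1 : (M - L (θ (n + 1))) * a / η₀ ≤ (M - L (θ (n + 1))) * b / η₀ :=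
        (div_le_div_iff_of_pos_right hη₀).mpr (mul_le_mul_of_nonneg_left hab hM1)
      -- ineq B
      have h2ab : 1 / b ≤ 2 * b - 2 * a := by
        rw [div_le_iff₀ hbpos]
        nlinarith [sq_nonneg (a - b)]
      have hB : 2 * K * a + K / b ≤ 2 * K * b := by
        have h5 := mul_le_mul_of_nonneg_left h2ab hKpos.le
        rw [mul_one_div] at h5
        nlinarith
      have hcast2 : Real.sqrt ((n + 1 : ℕ) : ℝ) = b := by rw [hb, hcast]
      rw [hcast2]
      ring_nf at ih hstep hA1 hB ⊢
      linarith [ih, hstep, hA1, hB]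
  -- conclusion
  refine ⟨2 * M / η₀ + 2 * K, 0, fun T hT => ?_⟩
  have hTpos : (0:ℝ) < T := by exact_mod_cast hT
  have hsT : 0 < Real.sqrt T := Real.sqrt_pos.mpr hTpos
  have hk := key T
  have hb2 : M - L (θ (T + 1)) ≤ 2 * M := by
    have := abs_le.1 (hbd (θ (T + 1))); linarith [this.1]
  have hsum : (∑ t ∈ Icc 1 T, ‖gradient L (θ t)‖ ^ 2)
      ≤ (2 * M / η₀ + 2 * K) * Real.sqrt T := by
    have h6 : (M - L (θ (T + 1))) * Real.sqrt T / η₀ ≤ 2 * M * Real.sqrt T / η₀ :=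
      (div_le_div_iff_of_pos_right hη₀).mpr (mul_le_mul_of_nonneg_right hb2 hsT.le)
    have h7 : 2 * M * Real.sqrt T / η₀ + 2 * K * Real.sqrt T
        = (2 * M / η₀ + 2 * K) * Real.sqrt T := by ring
    linarith
  rw [zero_mul, add_zero]
  have heq : (1 / (T:ℝ)) * ((2 * M / η₀ + 2 * K) * Real.sqrt T)
      = (2 * M / η₀ + 2 * K) / Real.sqrt T := by
    rw [eq_div_iff (ne_of_gt hsT)]
    have hss : Real.sqrt T * Real.sqrt T = (T:ℝ) := Real.mul_self_sqrt hTpos.le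
    field_simp
    linear_combination hss
  calc (1 / (T:ℝ)) * ∑ t ∈ Icc 1 T, ‖gradient L (θ t)‖ ^ 2
      ≤ (1 / (T:ℝ)) * ((2 * M / η₀ + 2 * K) * Real.sqrt T) :=
        mul_le_mul_of_nonneg_left hsum (by positivity)
    _ = (2 * M / η₀ + 2 * K) / Real.sqrt T := heq
end
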